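/- arXiv:math/0505402 — 4 statements merged into one kernel-verified Lean document; each statement's English description precedes it below -/
import Mathlib

section
/- There exist absolute constants 0 < c < C such that for all sufficiently large N, c ≤ (1/N) ∑_{n=1}^N Λ(n) ≤ C. -/
open ArithmeticFunction Finset Nat

noncomputable def psi (N : ℕ) : ℝ := ∑ n ∈ Finset.Icc 1 N, Λ n

lemma psi_nonneg (N : ℕ) : 0 ≤ psi N :=
  Finset.sum_nonneg fun _ _ => vonMangoldt_nonneg

lemma logfac_eq (N : ℕ) :
    Real.log (N ! : ℝ) = ∑ n ∈ Finset.Icc 1 N, Λ n * ((N / n : ℕ) : ℝ) := by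
  have h1 : (N ! : ℝ) = ∏ k ∈ Finset.Icc 1 N, (k : ℝ) := by
    rw [← Nat.cast_prod]
    congr 1
    rw [← Finset.Ico_add_one_right_eq_Icc, Finset.prod_Ico_id_eq_factorial]
  rw [h1, Real.log_prod (fun k hk => by
    have := (Finset.mem_Icc.mp hk).1; positivity)]
  have h2 : ∀ k ∈ Finset.Icc 1 N,
      Real.log (k : ℝ) = ∑ d ∈ (Finset.Icc 1 N).filter (· ∣ k), Λ d := by
    intro k hk
    rw [Finset.mem_Icc] at hk
    rw [← ArithmeticFunction.vonMangoldt_sum]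
    congr 1
    ext d
    simp only [Nat.mem_divisors, Finset.mem_filter, Finset.mem_Icc]
    constructor
    · rintro ⟨hd, hk0⟩
      exact ⟨⟨Nat.pos_of_ne_zero (fun h => hk0 (by simpa [h] using hd)),
        (Nat.le_of_dvd (Nat.pos_of_ne_zero hk0) hd).trans hk.2⟩, hd⟩
    · rintro ⟨⟨hd1, _⟩, hd⟩
      exact ⟨hd, by omega⟩
  rw [Finset.sum_congr rfl h2]
  rw [Finset.sum_comm' (s := Finset.Icc 1 N) (t := fun k => (Finset.Icc 1 N).filter (· ∣ k))
    (t' := Finset.Icc 1 N) (s' := fun d => (Finset.Icc 1 N).filter (d ∣ ·)) (fun k d => by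
      simp only [Finset.mem_filter]; tauto)]
  refine Finset.sum_congr rfl fun d hd => ?_
  rw [Finset.sum_const, nsmul_eq_mul, mul_comm]
  congr 1
  rw [← Nat.Ioc_filter_dvd_card_eq_div, ← Finset.Icc_add_one_left_eq_Ioc, zero_add]

lemma key_identity (m N : ℕ) (hm : m ≤ N) :
    Real.log (N ! : ℝ) - 2 * Real.log (m ! : ℝ) =
      ∑ n ∈ Finset.Icc 1 N, Λ n * (((N / n : ℕ) : ℝ) - 2 * ((m / n : ℕ) : ℝ)) := by
  have hext : Real.log (m ! : ℝ) = ∑ n ∈ Finset.Icc 1 N, Λ n * ((m / n : ℕ) : ℝ) := by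
    rw [logfac_eq]
    apply Finset.sum_subset (Finset.Icc_subset_Icc_right hm)
    intro x hx hx'
    simp only [Finset.mem_Icc] at hx hx'
    have : m / x = 0 := Nat.div_eq_of_lt (by omega)
    simp [this]
  rw [logfac_eq, hext, Finset.mul_sum, ← Finset.sum_sub_distrib]
  exact Finset.sum_congr rfl fun n _ => by ring

/-- upper bound on the bracket -/
lemma brk_le_one {m N n : ℕ} (hn : 0 < n) (h2 : N ≤ 2 * m + 1) :
    ((N / n : ℕ) : ℝ) - 2 * ((m / n : ℕ) : ℝ) ≤ 1 := by
  have h : N / n ≤ 2 * (m / n) + 1 := by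
    have h1 : N / n < 2 * (m / n) + 2 := by
      rw [Nat.div_lt_iff_lt_mul hn]
      have := Nat.div_add_mod m n
      have := Nat.mod_lt m hn
      nlinarith
    omega
  have := (Nat.cast_le (α := ℝ)).mpr h
  push_cast at this
  linarith

lemma brk_nonneg {m N n : ℕ} (hn : 0 < n) (h1 : 2 * m ≤ N) :
    0 ≤ ((N / n : ℕ) : ℝ) - 2 * ((m / n : ℕ) : ℝ) := by
  have h : 2 * (m / n) ≤ N / n := by
    rw [Nat.le_div_iff_mul_le hn]
    have := Nat.div_mul_le_self m n
    nlinarith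
  have := (Nat.cast_le (α := ℝ)).mpr h
  push_cast at this
  linarith

/-- if m < n ≤ N ≤ 2m+1 then the bracket equals 1 -/
lemma brk_eq_one {m N n : ℕ} (hmn : m < n) (hnN : n ≤ N) (h2 : N ≤ 2 * m + 1) :
    ((N / n : ℕ) : ℝ) - 2 * ((m / n : ℕ) : ℝ) = 1 := by
  have h1 : m / n = 0 := Nat.div_eq_of_lt hmn
  have h2' : N / n = 1 := by
    apply Nat.div_eq_of_lt_le
    · simpa using hnN
    · omega
  simp [h1, h2']

lemma lower_key {m N : ℕ} (h1 : 2 * m ≤ N) (h2 : N ≤ 2 * m + 1) :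
    Real.log (N ! : ℝ) - 2 * Real.log (m ! : ℝ) ≤ psi N := by
  rw [key_identity m N (by omega)]
  unfold psi
  apply Finset.sum_le_sum
  intro n hn
  rw [Finset.mem_Icc] at hn
  calc Λ n * (((N / n : ℕ) : ℝ) - 2 * ((m / n : ℕ) : ℝ)) ≤ Λ n * 1 :=
        mul_le_mul_of_nonneg_left (brk_le_one (by omega) h2) vonMangoldt_nonneg
    _ = Λ n := mul_one _

lemma upper_key {m N : ℕ} (h1 : 2 * m ≤ N) (h2 : N ≤ 2 * m + 1) :
    psi N - psi m ≤ Real.log (N ! : ℝ) - 2 * Real.log (m ! : ℝ) := by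
  rw [key_identity m N (by omega)]
  have hsplit : Finset.Icc 1 N = Finset.Icc 1 m ∪ Finset.Ioc m N := by
    ext x
    simp only [Finset.mem_Icc, Finset.mem_union, Finset.mem_Ioc]
    omega
  have hdisj : Disjoint (Finset.Icc 1 m) (Finset.Ioc m N) := by
    rw [Finset.disjoint_left]
    intro a ha hb
    simp only [Finset.mem_Icc] at ha
    simp only [Finset.mem_Ioc] at hb
    omega
  have hpsi : psi N = psi m + ∑ n ∈ Finset.Ioc m N, Λ n := by
    unfold psi
    rw [hsplit, Finset.sum_union hdisj]
  rw [hsplit, Finset.sum_union hdisj]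
  have e1 : ∑ n ∈ Finset.Ioc m N, Λ n * (((N / n : ℕ) : ℝ) - 2 * ((m / n : ℕ) : ℝ))
      = ∑ n ∈ Finset.Ioc m N, Λ n := by
    refine Finset.sum_congr rfl fun n hn => ?_
    rw [Finset.mem_Ioc] at hn
    rw [brk_eq_one hn.1 hn.2 h2, mul_one]
  have e2 : 0 ≤ ∑ n ∈ Finset.Icc 1 m, Λ n * (((N / n : ℕ) : ℝ) - 2 * ((m / n : ℕ) : ℝ)) := by
    apply Finset.sum_nonneg
    intro n hn
    rw [Finset.mem_Icc] at hn
    exact mul_nonneg vonMangoldt_nonneg (brk_nonneg (by omega) h1)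
  rw [e1]
  linarith

lemma centralBinom_le_four_pow (m : ℕ) : Nat.centralBinom m ≤ 4 ^ m := by
  have h : Nat.centralBinom m ≤ ∑ i ∈ Finset.range (2 * m + 1), (2 * m).choose i :=
    Finset.single_le_sum (f := fun i => (2 * m).choose i) (fun i _ => Nat.zero_le _)
      (by simp [Finset.mem_range]; omega)
  rw [Nat.sum_range_choose] at h
  calc Nat.centralBinom m ≤ 2 ^ (2 * m) := h
    _ = 4 ^ m := by rw [pow_mul]; norm_num

lemma log_centralBinom (m : ℕ) :
    Real.log (2 * m)! - 2 * Real.log (m !) = Real.log (Nat.centralBinom m) := by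
  have h : (Nat.centralBinom m) * m ! * m ! = (2 * m)! := by
    have h' := Nat.choose_mul_factorial_mul_factorial (show m ≤ 2 * m by omega)
    rwa [show 2 * m - m = m from by omega] at h'
  have hfac : (0 : ℝ) < (m ! : ℝ) := by exact_mod_cast Nat.factorial_pos m
  have hcb : (0 : ℝ) < (Nat.centralBinom m : ℝ) := by exact_mod_cast Nat.centralBinom_pos m
  have : ((2 * m)! : ℝ) = (Nat.centralBinom m : ℝ) * (m ! : ℝ) * (m ! : ℝ) := by
    exact_mod_cast congrArg (Nat.cast (R := ℝ)) h.symm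
  rw [this, Real.log_mul (by positivity) hfac.ne', Real.log_mul hcb.ne' hfac.ne']
  ring

lemma upper_psi : ∀ N : ℕ, psi N ≤ 4 * N := by
  intro N
  induction N using Nat.strong_induction_on with
  | _ N IH =>
    rcases Nat.eq_zero_or_pos N with rfl | hN
    · simp [psi]
    set m := N / 2 with hm
    have h1 : 2 * m ≤ N := by omega
    have h2 : N ≤ 2 * m + 1 := by omega
    have hkey := upper_key h1 h2
    have hfac : Real.log (N ! : ℝ) - 2 * Real.log (m ! : ℝ)
        ≤ m * Real.log 4 + Real.log (2 * m + 1) := by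
      have hmono : Real.log (N ! : ℝ) ≤ Real.log ((2 * m + 1)! : ℝ) :=
        Real.log_le_log (by exact_mod_cast Nat.factorial_pos N)
          (by exact_mod_cast Nat.factorial_le h2)

      have hcb : Real.log (2 * m)! - 2 * Real.log (m !) ≤ m * Real.log 4 := by
        rw [log_centralBinom]
        calc Real.log (Nat.centralBinom m) ≤ Real.log ((4 : ℝ) ^ m) :=
              Real.log_le_log (by exact_mod_cast Nat.centralBinom_pos m)
                (by exact_mod_cast _root_.centralBinom_le_four_pow m)
          _ = m * Real.log 4 := by rw [Real.log_pow]
      have hlm : Real.log ((2 * m + 1)! : ℝ)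
          = Real.log ((2 * m : ℝ) + 1) + Real.log ((2 * m)! : ℝ) := by
        have he : ((2 * m + 1)! : ℝ) = ((2 * m : ℝ) + 1) * ((2 * m)! : ℝ) := by
          rw [Nat.factorial_succ]; push_cast; ring
        rw [he, Real.log_mul (by positivity) (by exact_mod_cast (Nat.factorial_pos (2*m)).ne')]
      push_cast at hlm
      linarith
    have hlog4 : Real.log 4 ≤ 3 / 2 := by
      have h2' : Real.log 2 < 0.6931471808 := Real.log_two_lt_d9
      have : (4 : ℝ) = 2 ^ 2 := by norm_num
      rw [this, Real.log_pow]
      push_cast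
      linarith
    have hlogN : Real.log (2 * (m : ℝ) + 1) ≤ 2 * m := by
      have := Real.log_le_sub_one_of_pos (x := 2 * (m : ℝ) + 1) (by positivity)
      linarith
    have hIH : psi m ≤ 4 * m := IH m (by omega)
    have hmN : (2 : ℝ) * m ≤ N := by exact_mod_cast h1
    nlinarith [Nat.cast_nonneg (α := ℝ) m]

theorem chebyshev_bounds :
    ∃ c C : ℝ, 0 < c ∧ c < C ∧ ∃ N₀ : ℕ, ∀ N : ℕ, N₀ ≤ N →
      c ≤ (1 / (N : ℝ)) * ∑ n ∈ Finset.Icc 1 N, Λ n ∧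
      (1 / (N : ℝ)) * ∑ n ∈ Finset.Icc 1 N, Λ n ≤ C := by
  refine ⟨1/2, 4, by norm_num, by norm_num, 1000, fun N hN => ?_⟩
  have hN0 : (0 : ℝ) < N := by exact_mod_cast (by omega : 0 < N)
  have hpsiN : psi N = ∑ n ∈ Finset.Icc 1 N, Λ n := rfl
  set m := N / 2 with hm
  have h1 : 2 * m ≤ N := by omega
  have h2 : N ≤ 2 * m + 1 := by omega
  -- lower bound
  have hkey := lower_key h1 h2
  have hmono : Real.log ((2 * m)! : ℝ) ≤ Real.log (N ! : ℝ) :=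
    Real.log_le_log (by exact_mod_cast Nat.factorial_pos (2 * m))
      (by exact_mod_cast Nat.factorial_le h1)
  have hcb : (m : ℝ) * Real.log 4 - Real.log (2 * (m : ℝ) + 1)
      ≤ Real.log ((2 * m)! : ℝ) - 2 * Real.log (m ! : ℝ) := by
    rw [log_centralBinom]
    have h4 : (4 : ℝ) ^ m ≤ (2 * (m : ℝ) + 1) * Nat.centralBinom m := by
      have := Nat.four_pow_le_two_mul_self_mul_centralBinom m (by omega)
      have hc : ((4 ^ m : ℕ) : ℝ) ≤ ((2 * m * Nat.centralBinom m : ℕ) : ℝ) := by exact_mod_cast this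
      push_cast at hc
      nlinarith [Nat.cast_pos (α := ℝ) |>.mpr (Nat.centralBinom_pos m)]
    have hlog := Real.log_le_log (by positivity) h4
    rw [Real.log_pow, Real.log_mul (by positivity)
      (by exact_mod_cast (Nat.centralBinom_pos m).ne')] at hlog
    linarith
  have hlog4 : (1.38 : ℝ) ≤ Real.log 4 := by
    have h2' : (0.6931471803 : ℝ) < Real.log 2 := Real.log_two_gt_d9
    have : (4 : ℝ) = 2 ^ 2 := by norm_num
    rw [this, Real.log_pow]
    push_cast
    linarith
  have hsqrt : Real.log (2 * (m : ℝ) + 1) ≤ 2 * Real.sqrt (N + 1) := by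
    have hNm : 2 * (m : ℝ) + 1 ≤ N + 1 := by
      have : (2 * m : ℝ) ≤ N := by exact_mod_cast h1
      linarith
    have h0 : (0 : ℝ) < 2 * (m : ℝ) + 1 := by positivity
    calc Real.log (2 * (m : ℝ) + 1) ≤ Real.log ((N : ℝ) + 1) :=
          Real.log_le_log h0 hNm
      _ = 2 * Real.log (Real.sqrt ((N : ℝ) + 1)) := by
          rw [Real.log_sqrt (by positivity)]; ring
      _ ≤ 2 * (Real.sqrt ((N : ℝ) + 1) - 1) := by
          have := Real.log_le_sub_one_of_pos (Real.sqrt_pos.mpr (by positivity : (0:ℝ) < (N:ℝ)+1))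
          linarith
      _ ≤ 2 * Real.sqrt ((N : ℝ) + 1) := by linarith
  have hs := Real.sq_sqrt (by positivity : (0:ℝ) ≤ (N : ℝ) + 1)
  have hs0 := Real.sqrt_nonneg ((N : ℝ) + 1)
  set s := Real.sqrt ((N : ℝ) + 1)
  have hmlb : ((N : ℝ) - 1) / 2 ≤ (m : ℝ) := by
    have : (N : ℝ) ≤ 2 * m + 1 := by exact_mod_cast h2
    linarith
  have hNbig : (1000 : ℝ) ≤ N := by exact_mod_cast hN
  have hlower : (N : ℝ) / 2 ≤ psi N := by
    have hstep : (m : ℝ) * Real.log 4 - Real.log (2 * (m : ℝ) + 1) ≤ psi N := by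
      have : (m : ℝ) * Real.log 4 - Real.log (2 * (m : ℝ) + 1)
          ≤ Real.log (N ! : ℝ) - 2 * Real.log (m ! : ℝ) := by linarith
      linarith
    have hm0 : (0 : ℝ) ≤ m := Nat.cast_nonneg m
    have hlog4' : Real.log 4 ≤ 3/2 := by
      have h2' : Real.log 2 < 0.6931471808 := Real.log_two_lt_d9
      have : (4 : ℝ) = 2 ^ 2 := by norm_num
      rw [this, Real.log_pow]; push_cast; linarith
    nlinarith [sq_nonneg (s - 20)]
  have hrw : 1 / (N : ℝ) * ∑ n ∈ Finset.Icc 1 N, Λ n = psi N / N := by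
    rw [← hpsiN]; ring
  constructor
  · rw [hrw, le_div_iff₀ hN0]
    linarith
  · rw [hrw, div_le_iff₀ hN0]
    have h4 := upper_psi N
    push_cast at h4
    linarith
end

section
/- Let N be a positive integer, let ε > 0, and let f, g, h : ℤ/Nℤ → ℂ satisfy |f(n)|, |g(n)|, |h(n)| ≤ 1 for all n, and |f̂(ξ)| ≤ ε for all ξ ∈ ℤ/Nℤ. Then |𝔼_{a,r ∈ ℤ/Nℤ} f(a) g(a+r) h(a+2r)| ≤ ε. -/
noncomputable def dft {N : ℕ} [NeZero N] (f : ZMod N → ℂ) (ξ : ZMod N) : ℂ :=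
  (N : ℂ)⁻¹ * ∑ n : ZMod N, f n * Complex.exp (-2 * Real.pi * Complex.I * ξ.val * n.val / N)

namespace LinUnif

open Finset

variable {N : ℕ} [NeZero N]

local notation "ψ" => ZMod.stdAddChar (N := N)

lemma exp_eq (ξ n : ZMod N) :
    Complex.exp (-2 * Real.pi * Complex.I * ξ.val * n.val / N) = ψ (-(ξ * n)) := by
  have h1 : -(ξ * n) = ((-(ξ.val * n.val : ℤ) : ℤ) : ZMod N) := by
    push_cast
    simp [ZMod.natCast_val, ZMod.cast_id]
  rw [h1, ZMod.stdAddChar_coe]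
  push_cast
  ring_nf

lemma sum_psi (t : ZMod N) : ∑ i : ZMod N, ψ (t * i) = if t = 0 then (N : ℂ) else 0 := by
  split_ifs with h
  · simp only [h, zero_mul, AddChar.map_zero_eq_one, sum_const, card_univ, ZMod.card,
      nsmul_eq_mul, mul_one]
  · exact AddChar.sum_eq_zero_of_ne_one (ZMod.isPrimitive_stdAddChar N h)

lemma conj_psi (x : ZMod N) : (starRingEnd ℂ) (ψ x) = ψ (-x) := by
  rw [ZMod.stdAddChar_apply, ZMod.stdAddChar_apply, AddChar.map_neg_eq_inv,
    Circle.coe_inv_eq_conj]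

lemma dft_eq (f : ZMod N → ℂ) (ξ : ZMod N) :
    dft f ξ = (N : ℂ)⁻¹ * ∑ x : ZMod N, f x * ψ (-(ξ * x)) := by
  unfold dft
  simp only [exp_eq]

lemma plancherel (g : ZMod N → ℂ) :
    ∑ ξ : ZMod N, (Complex.normSq (dft g ξ) : ℂ)
      = (N : ℂ)⁻¹ * ∑ n : ZMod N, (Complex.normSq (g n) : ℂ) := by
  have hN : (N : ℂ) ≠ 0 := Nat.cast_ne_zero.mpr (NeZero.ne N)
  have conjdft : ∀ ξ : ZMod N, (starRingEnd ℂ) (dft g ξ)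
      = (N : ℂ)⁻¹ * ∑ n : ZMod N, (starRingEnd ℂ) (g n) * ψ (ξ * n) := by
    intro ξ
    rw [dft_eq, map_mul, map_sum, map_inv₀, Complex.conj_natCast]
    congr 1
    refine Finset.sum_congr rfl fun n _ => ?_
    rw [map_mul, conj_psi, neg_neg]
  calc ∑ ξ : ZMod N, (Complex.normSq (dft g ξ) : ℂ)
      = ∑ ξ : ZMod N, dft g ξ * (starRingEnd ℂ) (dft g ξ) := by
        simp [Complex.mul_conj]
    _ = ∑ ξ : ZMod N, ((N : ℂ)⁻¹ * (N : ℂ)⁻¹) * ∑ m : ZMod N, ∑ n : ZMod N,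
          (g m * (starRingEnd ℂ) (g n)) * ψ ((n - m) * ξ) := by
        refine Finset.sum_congr rfl fun ξ _ => ?_
        rw [conjdft, dft_eq, mul_mul_mul_comm, Finset.sum_mul_sum]
        congr 1
        refine Finset.sum_congr rfl fun m _ => ?_
        refine Finset.sum_congr rfl fun n _ => ?_
        rw [show ((n - m) * ξ : ZMod N) = -(ξ * m) + ξ * n by ring, AddChar.map_add_eq_mul]
        ring
    _ = ((N : ℂ)⁻¹ * (N : ℂ)⁻¹) * ∑ m : ZMod N, ∑ n : ZMod N,
          (g m * (starRingEnd ℂ) (g n)) * ∑ ξ : ZMod N, ψ ((n - m) * ξ) := by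
        rw [← Finset.mul_sum, Finset.sum_comm]
        congr 1
        refine Finset.sum_congr rfl fun m _ => ?_
        rw [Finset.sum_comm]
        refine Finset.sum_congr rfl fun n _ => ?_
        rw [Finset.mul_sum]
    _ = ((N : ℂ)⁻¹ * (N : ℂ)⁻¹) * ∑ m : ZMod N, (g m * (starRingEnd ℂ) (g m)) * (N : ℂ) := by
        congr 1
        refine Finset.sum_congr rfl fun m _ => ?_
        have hrw : (∑ n : ZMod N, (g m * (starRingEnd ℂ) (g n)) * ∑ ξ : ZMod N, ψ ((n - m) * ξ))
            = ∑ n : ZMod N, if n = m then (g m * (starRingEnd ℂ) (g n)) * (N : ℂ) else 0 := by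
          refine Finset.sum_congr rfl fun n _ => ?_
          rw [sum_psi]
          by_cases hnm : n = m <;> simp [hnm, sub_eq_zero]
        rw [hrw, Finset.sum_ite_eq', if_pos (Finset.mem_univ m)]
    _ = (N : ℂ)⁻¹ * ∑ n : ZMod N, (Complex.normSq (g n) : ℂ) := by
        simp only [Complex.mul_conj]
        rw [← Finset.sum_mul]
        field_simp

lemma plancherel_le (g : ZMod N → ℂ) (hg : ∀ n, ‖g n‖ ≤ 1) :
    ∑ ξ : ZMod N, ‖dft g ξ‖ ^ 2 ≤ 1 := by
  have hNR : (N : ℝ) ≠ 0 := Nat.cast_ne_zero.mpr (NeZero.ne N)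
  have h1 : ∑ ξ : ZMod N, Complex.normSq (dft g ξ)
      = (N : ℝ)⁻¹ * ∑ n : ZMod N, Complex.normSq (g n) := by
    have h0 := plancherel (N := N) g
    have h1 : ((∑ ξ : ZMod N, Complex.normSq (dft g ξ) : ℝ) : ℂ)
        = (((N : ℝ)⁻¹ * ∑ n : ZMod N, Complex.normSq (g n) : ℝ) : ℂ) := by
      push_cast
      exact h0
    exact_mod_cast h1
  calc ∑ ξ : ZMod N, ‖dft g ξ‖ ^ 2
      = ∑ ξ : ZMod N, Complex.normSq (dft g ξ) := by simp [Complex.sq_norm]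
    _ = (N : ℝ)⁻¹ * ∑ n : ZMod N, Complex.normSq (g n) := h1
    _ ≤ (N : ℝ)⁻¹ * (N : ℝ) := by
        refine mul_le_mul_of_nonneg_left ?_ (by positivity)
        calc ∑ n : ZMod N, Complex.normSq (g n) ≤ ∑ _n : ZMod N, (1 : ℝ) := by
              refine Finset.sum_le_sum fun n _ => ?_
              rw [← Complex.sq_norm]
              nlinarith [hg n, norm_nonneg (g n)]
          _ = (N : ℝ) := by simp [ZMod.card]
    _ = 1 := inv_mul_cancel₀ hNR

lemma aux3 (c A B C : ℂ) : (c * A) * (c * B) * (c * C) = c ^ 3 * (A * B * C) := by ring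

lemma key_identity (f g h : ZMod N → ℂ) :
    ((N : ℂ)⁻¹) ^ 2 * ∑ a : ZMod N, ∑ r : ZMod N, f a * g (a + r) * h (a + 2 * r)
      = ∑ ξ : ZMod N, dft f ξ * dft g (-2 * ξ) * dft h ξ := by
  have hN : (N : ℂ) ≠ 0 := Nat.cast_ne_zero.mpr (NeZero.ne N)
  have hre : ∑ a : ZMod N, ∑ r : ZMod N, f a * g (a + r) * h (a + 2 * r)
      = ∑ x : ZMod N, ∑ y : ZMod N, f x * g y * h (2 * y - x) := by
    refine Finset.sum_congr rfl fun a _ => ?_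
    refine Fintype.sum_equiv (Equiv.addLeft a) _ _ fun r => ?_
    show f a * g (a + r) * h (a + 2 * r) = f a * g (a + r) * h (2 * (a + r) - a)
    rw [show (2 * (a + r) - a : ZMod N) = a + 2 * r by ring]
  rw [hre]
  symm
  calc ∑ ξ : ZMod N, dft f ξ * dft g (-2 * ξ) * dft h ξ
      = ∑ ξ : ZMod N, ((N : ℂ)⁻¹) ^ 3 * ∑ x : ZMod N, ∑ y : ZMod N, ∑ z : ZMod N,
          (f x * g y * h z) * ψ ((2 * y - x - z) * ξ) := by
        refine Finset.sum_congr rfl fun ξ _ => ?_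
        rw [dft_eq, dft_eq, dft_eq, aux3]
        congr 1
        rw [Finset.sum_mul_sum, Finset.sum_mul]
        refine Finset.sum_congr rfl fun x _ => ?_
        rw [Finset.sum_mul]
        refine Finset.sum_congr rfl fun y _ => ?_
        rw [Finset.mul_sum]
        refine Finset.sum_congr rfl fun z _ => ?_
        rw [show ((2 * y - x - z) * ξ : ZMod N) = (-(ξ * x) + -((-2 * ξ) * y)) + -(ξ * z) by ring,
          AddChar.map_add_eq_mul, AddChar.map_add_eq_mul]
        ring
    _ = ((N : ℂ)⁻¹) ^ 3 * ∑ x : ZMod N, ∑ y : ZMod N, ∑ z : ZMod N,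
          (f x * g y * h z) * ∑ ξ : ZMod N, ψ ((2 * y - x - z) * ξ) := by
        rw [← Finset.mul_sum]
        congr 1
        rw [Finset.sum_comm]
        refine Finset.sum_congr rfl fun x _ => ?_
        rw [Finset.sum_comm]
        refine Finset.sum_congr rfl fun y _ => ?_
        rw [Finset.sum_comm]
        refine Finset.sum_congr rfl fun z _ => ?_
        rw [Finset.mul_sum]
    _ = ((N : ℂ)⁻¹) ^ 3 * ∑ x : ZMod N, ∑ y : ZMod N,
          ((f x * g y * h (2 * y - x)) * (N : ℂ)) := by
        congr 1
        refine Finset.sum_congr rfl fun x _ => ?_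
        refine Finset.sum_congr rfl fun y _ => ?_
        have hrw : (∑ z : ZMod N, (f x * g y * h z) * ∑ ξ : ZMod N, ψ ((2 * y - x - z) * ξ))
            = ∑ z : ZMod N, if z = 2 * y - x then (f x * g y * h z) * (N : ℂ) else 0 := by
          refine Finset.sum_congr rfl fun z _ => ?_
          rw [sum_psi]
          by_cases hz : z = 2 * y - x
          · rw [if_pos (by rw [hz]; ring), if_pos hz]
          · rw [if_neg, if_neg hz, mul_zero]
            intro hc
            exact hz (by linear_combination -hc)
        rw [hrw, Finset.sum_ite_eq', if_pos (Finset.mem_univ _)]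
    _ = ((N : ℂ)⁻¹) ^ 2 * ∑ x : ZMod N, ∑ y : ZMod N, f x * g y * h (2 * y - x) := by
        simp only [← Finset.sum_mul]
        field_simp

end LinUnif

theorem linear_uniformity_controls_three_term (N : ℕ) [NeZero N] (hodd : Odd N) (ε : ℝ)
    (hε : 0 < ε) (f g h : ZMod N → ℂ)
    (hf : ∀ n, ‖f n‖ ≤ 1) (hg : ∀ n, ‖g n‖ ≤ 1)
    (hh : ∀ n, ‖h n‖ ≤ 1)
    (hfhat : ∀ ξ : ZMod N, ‖dft f ξ‖ ≤ ε) :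
    ‖((N : ℂ)⁻¹) ^ 2 *
        ∑ a : ZMod N, ∑ r : ZMod N, f a * g (a + r) * h (a + 2 * r)‖ ≤ ε := by
  rw [LinUnif.key_identity]
  have h2 : (2 : ZMod N) * (2 : ZMod N)⁻¹ = 1 := by
    have hco : Nat.Coprime 2 N := Nat.coprime_two_left.mpr hodd
    simpa using ZMod.coe_mul_inv_eq_one 2 hco
  set e2 : ZMod N ≃ ZMod N :=
    { toFun := fun ξ => -2 * ξ
      invFun := fun η => -(2 : ZMod N)⁻¹ * η
      left_inv := fun ξ => by
        show -(2 : ZMod N)⁻¹ * (-2 * ξ) = ξ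
        rw [show -(2 : ZMod N)⁻¹ * (-2 * ξ) = ((2 : ZMod N) * (2 : ZMod N)⁻¹) * ξ by ring, h2,
          one_mul]
      right_inv := fun η => by
        show (-2 : ZMod N) * (-(2 : ZMod N)⁻¹ * η) = η
        rw [show (-2 : ZMod N) * (-(2 : ZMod N)⁻¹ * η) = ((2 : ZMod N) * (2 : ZMod N)⁻¹) * η
          by ring, h2, one_mul] } with he2
  have hGsum : ∑ ξ : ZMod N, ‖dft g (-2 * ξ)‖ ^ 2
      = ∑ ξ : ZMod N, ‖dft g ξ‖ ^ 2 :=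
    Fintype.sum_equiv e2 _ _ fun ξ => rfl
  have hS : ∑ ξ : ZMod N, ‖dft g (-2 * ξ)‖ * ‖dft h ξ‖ ≤ 1 := by
    have hcs := Finset.sum_mul_sq_le_sq_mul_sq Finset.univ
      (fun ξ : ZMod N => ‖dft g (-2 * ξ)‖) (fun ξ => ‖dft h ξ‖)
    have hG : ∑ ξ : ZMod N, ‖dft g (-2 * ξ)‖ ^ 2 ≤ 1 := by
      rw [hGsum]; exact LinUnif.plancherel_le g hg
    have hH : ∑ ξ : ZMod N, ‖dft h ξ‖ ^ 2 ≤ 1 := LinUnif.plancherel_le h hh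
    have hnn : (0 : ℝ) ≤ ∑ ξ : ZMod N, ‖dft g (-2 * ξ)‖ * ‖dft h ξ‖ :=
      Finset.sum_nonneg fun ξ _ => mul_nonneg (norm_nonneg _) (norm_nonneg _)
    have hGnn : (0 : ℝ) ≤ ∑ ξ : ZMod N, ‖dft g (-2 * ξ)‖ ^ 2 :=
      Finset.sum_nonneg fun ξ _ => sq_nonneg _
    have hHnn : (0 : ℝ) ≤ ∑ ξ : ZMod N, ‖dft h ξ‖ ^ 2 :=
      Finset.sum_nonneg fun ξ _ => sq_nonneg _
    nlinarith
  calc ‖∑ ξ : ZMod N, dft f ξ * dft g (-2 * ξ) * dft h ξ‖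
      ≤ ∑ ξ : ZMod N, ‖dft f ξ * dft g (-2 * ξ) * dft h ξ‖ :=
        norm_sum_le _ _
    _ ≤ ∑ ξ : ZMod N, ε * (‖dft g (-2 * ξ)‖ * ‖dft h ξ‖) := by
        refine Finset.sum_le_sum fun ξ _ => ?_
        rw [norm_mul, norm_mul, mul_assoc]
        exact mul_le_mul_of_nonneg_right (hfhat ξ)
          (mul_nonneg (norm_nonneg _) (norm_nonneg _))
    _ = ε * ∑ ξ : ZMod N, ‖dft g (-2 * ξ)‖ * ‖dft h ξ‖ := by
        rw [Finset.mul_sum]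
    _ ≤ ε * 1 := mul_le_mul_of_nonneg_left hS (le_of_lt hε)
    _ = ε := mul_one ε
end

section
/- Let N ≥ 3 be a prime and let f₀, f₁, f₂ : ℤ/Nℤ → ℂ be bounded in magnitude by 1. Then |𝔼_{a,r ∈ ℤ/Nℤ} f₀(a) f₁(a+r) f₂(a+2r)| ≤ ‖f₀‖_{U²(ℤ/Nℤ)}. -/
open Finset

theorem generalized_von_neumann_k3 (N : ℕ) [NeZero N] (hN : N.Prime) (hN3 : 3 ≤ N)
    (f₀ f₁ f₂ : ZMod N → ℂ)
    (h₀ : ∀ n, ‖f₀ n‖ ≤ 1) (h₁ : ∀ n, ‖f₁ n‖ ≤ 1)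
    (h₂ : ∀ n, ‖f₂ n‖ ≤ 1) :
    ‖((N : ℂ)⁻¹) ^ 2 *
        ∑ a : ZMod N, ∑ r : ZMod N, f₀ a * f₁ (a + r) * f₂ (a + 2 * r)‖
      ≤ ‖((N : ℂ)⁻¹) ^ 3 * ∑ n : ZMod N, ∑ h₁ : ZMod N, ∑ h₂ : ZMod N,
          f₀ n * (starRingEnd ℂ) (f₀ (n + h₁)) * (starRingEnd ℂ) (f₀ (n + h₂)) *
            f₀ (n + h₁ + h₂)‖ ^ ((1 : ℝ) / 4) := by
  haveI : Fact N.Prime := ⟨hN⟩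
  set K := starRingEnd ℂ with hK
  set c : ZMod N → ℂ := fun k => ∑ m : ZMod N, f₀ m * K (f₀ (m + k)) with hc
  set b : ZMod N → ℂ := fun h => ∑ n : ZMod N, f₁ n * K (f₁ (n + h)) with hb
  set g : ZMod N → ℂ := fun x => ∑ d : ZMod N, f₀ (x - 2*d) * f₁ (x - d) with hg
  set S := ∑ a : ZMod N, ∑ r : ZMod N, f₀ a * f₁ (a + r) * f₂ (a + 2 * r) with hS
  set T := ∑ n : ZMod N, ∑ h1 : ZMod N, ∑ h2 : ZMod N,
      f₀ n * K (f₀ (n + h1)) * K (f₀ (n + h2)) * f₀ (n + h1 + h2) with hT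
  have hNpos : (0:ℝ) < N := by positivity
  have hcardZ : (Finset.univ : Finset (ZMod N)).card = N := by
    simp [Finset.card_univ, ZMod.card]
  -- Step 1 : S = ∑ x, f₂ x * g x
  have hS1 : S = ∑ x : ZMod N, f₂ x * g x := by
    rw [hS, Finset.sum_comm]
    calc ∑ r : ZMod N, ∑ a : ZMod N, f₀ a * f₁ (a + r) * f₂ (a + 2 * r)
        = ∑ r : ZMod N, ∑ x : ZMod N, f₀ (x - 2*r) * f₁ (x - r) * f₂ x := by
          refine Finset.sum_congr rfl fun r _ => ?_
          rw [← Equiv.sum_comp (Equiv.subRight (2*r))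
            (fun a => f₀ a * f₁ (a + r) * f₂ (a + 2*r))]
          refine Finset.sum_congr rfl fun x _ => ?_
          simp only [Equiv.subRight_apply]
          have e1 : x - 2*r + r = x - r := by ring
          have e2 : x - 2*r + 2*r = x := by ring
          rw [e1, e2]
      _ = ∑ x : ZMod N, ∑ r : ZMod N, f₀ (x - 2*r) * f₁ (x - r) * f₂ x :=
          Finset.sum_comm
      _ = ∑ x : ZMod N, f₂ x * g x := by
          refine Finset.sum_congr rfl fun x _ => ?_
          rw [hg, Finset.mul_sum]
          exact Finset.sum_congr rfl fun r _ => by ring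
  -- Step 2 : T = ∑ h, c h * K (c h)
  have hKc : ∀ k, K (c k) = ∑ m : ZMod N, K (f₀ m) * f₀ (m + k) := by
    intro k
    rw [hc]
    simp only [map_sum, map_mul, hK, Complex.conj_conj]
  have hTc : T = ∑ h : ZMod N, c h * K (c h) := by
    rw [hT, Finset.sum_comm]
    refine Finset.sum_congr rfl fun h1 _ => ?_
    have inner : ∀ n : ZMod N,
        ∑ h2 : ZMod N, K (f₀ (n + h2)) * f₀ (n + h1 + h2)
          = ∑ m : ZMod N, K (f₀ m) * f₀ (m + h1) := by
      intro n
      rw [← Equiv.sum_comp (Equiv.addLeft n) (fun m => K (f₀ m) * f₀ (m + h1))]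
      refine Finset.sum_congr rfl fun h2 _ => ?_
      simp only [Equiv.coe_addLeft]
      have e1 : n + h2 + h1 = n + h1 + h2 := by ring
      rw [e1]
    calc ∑ n : ZMod N, ∑ h2 : ZMod N,
          f₀ n * K (f₀ (n + h1)) * K (f₀ (n + h2)) * f₀ (n + h1 + h2)
        = ∑ n : ZMod N, (f₀ n * K (f₀ (n + h1))) *
            ∑ h2 : ZMod N, K (f₀ (n + h2)) * f₀ (n + h1 + h2) := by
          refine Finset.sum_congr rfl fun n _ => ?_
          rw [Finset.mul_sum]
          exact Finset.sum_congr rfl fun h2 _ => by ring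
      _ = ∑ n : ZMod N, (f₀ n * K (f₀ (n + h1))) *
            ∑ m : ZMod N, K (f₀ m) * f₀ (m + h1) :=
          Finset.sum_congr rfl fun n _ => by rw [inner n]
      _ = (∑ n : ZMod N, f₀ n * K (f₀ (n + h1))) *
            ∑ m : ZMod N, K (f₀ m) * f₀ (m + h1) := by
          rw [← Finset.sum_mul]
      _ = c h1 * K (c h1) := by rw [hKc]
  -- Step 3 : ∑ x, g x * K (g x) = ∑ h, c (2h) * b h
  have hGid : ∑ x : ZMod N, g x * K (g x) = ∑ h : ZMod N, c (2*h) * b h := by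
    calc ∑ x : ZMod N, g x * K (g x)
        = ∑ x : ZMod N, ∑ d : ZMod N, ∑ d' : ZMod N,
            (f₀ (x - 2*d) * f₁ (x - d)) * (K (f₀ (x - 2*d')) * K (f₁ (x - d'))) := by
          refine Finset.sum_congr rfl fun x _ => ?_
          rw [hg, map_sum, Finset.sum_mul_sum]
          exact Finset.sum_congr rfl fun d _ =>
            Finset.sum_congr rfl fun d' _ => by rw [map_mul]
      _ = ∑ x : ZMod N, ∑ d : ZMod N, ∑ h : ZMod N,
            (f₀ (x - 2*d) * f₁ (x - d)) * (K (f₀ (x - 2*d + 2*h)) * K (f₁ (x - d + h))) := by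
          refine Finset.sum_congr rfl fun x _ => Finset.sum_congr rfl fun d _ => ?_
          rw [← Equiv.sum_comp (Equiv.subLeft d)
            (fun d' => (f₀ (x - 2*d) * f₁ (x - d)) * (K (f₀ (x - 2*d')) * K (f₁ (x - d'))))]
          refine Finset.sum_congr rfl fun h _ => ?_
          simp only [Equiv.subLeft_apply]
          have e1 : x - 2*(d - h) = x - 2*d + 2*h := by ring
          have e2 : x - (d - h) = x - d + h := by ring
          rw [e1, e2]
      _ = ∑ h : ZMod N, ∑ x : ZMod N, ∑ d : ZMod N,
            (f₀ (x - 2*d) * f₁ (x - d)) * (K (f₀ (x - 2*d + 2*h)) * K (f₁ (x - d + h))) := by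
          calc ∑ x : ZMod N, ∑ d : ZMod N, ∑ h : ZMod N,
                (f₀ (x - 2*d) * f₁ (x - d)) * (K (f₀ (x - 2*d + 2*h)) * K (f₁ (x - d + h)))
              = ∑ x : ZMod N, ∑ h : ZMod N, ∑ d : ZMod N,
                (f₀ (x - 2*d) * f₁ (x - d)) * (K (f₀ (x - 2*d + 2*h)) * K (f₁ (x - d + h))) :=
                Finset.sum_congr rfl fun x _ => Finset.sum_comm
            _ = ∑ h : ZMod N, ∑ x : ZMod N, ∑ d : ZMod N,
                (f₀ (x - 2*d) * f₁ (x - d)) * (K (f₀ (x - 2*d + 2*h)) * K (f₁ (x - d + h))) :=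
                Finset.sum_comm
      _ = ∑ h : ZMod N, ∑ d : ZMod N, ∑ n : ZMod N,
            (f₀ (n - d) * f₁ n) * (K (f₀ (n - d + 2*h)) * K (f₁ (n + h))) := by
          refine Finset.sum_congr rfl fun h _ => ?_
          rw [Finset.sum_comm]
          refine Finset.sum_congr rfl fun d _ => ?_
          rw [← Equiv.sum_comp (Equiv.addRight d)
            (fun x => (f₀ (x - 2*d) * f₁ (x - d)) * (K (f₀ (x - 2*d + 2*h)) * K (f₁ (x - d + h))))]
          refine Finset.sum_congr rfl fun n _ => ?_
          simp only [Equiv.coe_addRight]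
          have e1 : n + d - 2*d = n - d := by ring
          have e2 : n + d - d = n := by ring
          rw [e1, e2]
      _ = ∑ h : ZMod N, c (2*h) * b h := by
          refine Finset.sum_congr rfl fun h _ => ?_
          rw [Finset.sum_comm]
          calc ∑ n : ZMod N, ∑ d : ZMod N,
                (f₀ (n - d) * f₁ n) * (K (f₀ (n - d + 2*h)) * K (f₁ (n + h)))
              = ∑ n : ZMod N, (f₁ n * K (f₁ (n + h))) *
                  ∑ d : ZMod N, f₀ (n - d) * K (f₀ (n - d + 2*h)) := by
                refine Finset.sum_congr rfl fun n _ => ?_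
                rw [Finset.mul_sum]
                exact Finset.sum_congr rfl fun d _ => by ring
            _ = ∑ n : ZMod N, (f₁ n * K (f₁ (n + h))) * c (2*h) := by
                refine Finset.sum_congr rfl fun n _ => ?_
                congr 1
                show _ = ∑ m : ZMod N, f₀ m * K (f₀ (m + 2*h))
                rw [← Equiv.sum_comp (Equiv.subLeft n)
                  (fun m => f₀ m * K (f₀ (m + 2*h)))]
                refine Finset.sum_congr rfl fun d _ => ?_
                simp only [Equiv.subLeft_apply]
            _ = c (2*h) * b h := by
                rw [← Finset.sum_mul, hb]
                ring
  -- bound on b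
  have hb_le : ∀ h : ZMod N, ‖(b h)‖ ≤ N := by
    intro h
    rw [hb]
    calc ‖(∑ n : ZMod N, f₁ n * K (f₁ (n + h)))‖
        ≤ ∑ n : ZMod N, ‖(f₁ n * K (f₁ (n + h)))‖ :=
          norm_sum_le _ _
      _ ≤ ∑ _n : ZMod N, (1:ℝ) := by
          refine Finset.sum_le_sum fun n _ => ?_
          rw [norm_mul, hK, Complex.norm_conj]
          exact mul_le_one₀ (h₁ n) (norm_nonneg _) (h₁ _)
      _ = N := by simp [hcardZ]
  -- |S| ≤ ∑ |g|
  have hS_le : ‖S‖ ≤ ∑ x : ZMod N, ‖(g x)‖ := by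
    rw [hS1]
    calc ‖(∑ x : ZMod N, f₂ x * g x)‖
        ≤ ∑ x : ZMod N, ‖(f₂ x * g x)‖ := norm_sum_le _ _
      _ ≤ ∑ x : ZMod N, ‖(g x)‖ := by
          refine Finset.sum_le_sum fun x _ => ?_
          rw [norm_mul]
          exact mul_le_of_le_one_left (norm_nonneg _) (h₂ x)
  -- ∑ |g|² ≤ N ∑_h |c(2h)|
  have hg_sq : ∑ x : ZMod N, ‖(g x)‖ ^ 2
      ≤ N * ∑ h : ZMod N, ‖(c (2*h))‖ := by
    have hcast : ((∑ x : ZMod N, ‖(g x)‖ ^ 2 : ℝ) : ℂ)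
        = ∑ h : ZMod N, c (2*h) * b h := by
      rw [← hGid, Complex.ofReal_sum]
      refine Finset.sum_congr rfl fun x _ => ?_
      rw [Complex.sq_norm, hK, Complex.mul_conj]
    calc ∑ x : ZMod N, ‖(g x)‖ ^ 2
        = ‖((∑ x : ZMod N, ‖(g x)‖ ^ 2 : ℝ) : ℂ)‖ := by
          rw [Complex.norm_real, Real.norm_eq_abs, abs_of_nonneg (by positivity)]
      _ = ‖(∑ h : ZMod N, c (2*h) * b h)‖ := by rw [hcast]
      _ ≤ ∑ h : ZMod N, ‖(c (2*h) * b h)‖ := norm_sum_le _ _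
      _ ≤ ∑ h : ZMod N, ‖(c (2*h))‖ * N := by
          refine Finset.sum_le_sum fun h _ => ?_
          rw [norm_mul]
          exact mul_le_mul_of_nonneg_left (hb_le h) (norm_nonneg _)
      _ = N * ∑ h : ZMod N, ‖(c (2*h))‖ := by
          rw [← Finset.sum_mul]; ring
  -- reindex 2h
  have h2ne : (2 : ZMod N) ≠ 0 := by
    intro h
    have : ((2:ℕ) : ZMod N) = 0 := by exact_mod_cast h
    rw [ZMod.natCast_eq_zero_iff] at this
    have := Nat.le_of_dvd (by norm_num) this
    omega
  have h2sum : ∑ h : ZMod N, ‖(c (2*h))‖ = ∑ k : ZMod N, ‖(c k)‖ := by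
    exact Equiv.sum_comp (Equiv.mulLeft₀ (2 : ZMod N) h2ne) (fun k => ‖(c k)‖)
  -- Cauchy-Schwarz twice
  have hCS1 : (∑ x : ZMod N, ‖(g x)‖) ^ 2
      ≤ N * ∑ x : ZMod N, ‖(g x)‖ ^ 2 := by
    have := sq_sum_le_card_mul_sum_sq (s := (Finset.univ : Finset (ZMod N)))
      (f := fun x => ‖(g x)‖)
    rwa [hcardZ] at this
  have hCS2 : (∑ k : ZMod N, ‖(c k)‖) ^ 2
      ≤ N * ∑ k : ZMod N, ‖(c k)‖ ^ 2 := by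
    have := sq_sum_le_card_mul_sum_sq (s := (Finset.univ : Finset (ZMod N)))
      (f := fun k => ‖(c k)‖)
    rwa [hcardZ] at this
  set Tr := ∑ k : ZMod N, ‖(c k)‖ ^ 2 with hTr
  have hTrpos : 0 ≤ Tr := by positivity
  have hTcast : T = ((Tr : ℝ) : ℂ) := by
    rw [hTc, hTr, Complex.ofReal_sum]
    refine Finset.sum_congr rfl fun h _ => ?_
    rw [Complex.sq_norm, hK, Complex.mul_conj]
  -- |S|^4 ≤ N^5 Tr
  have hSA : ‖S‖ ^ 2 ≤ (N:ℝ)^2 * ∑ k : ZMod N, ‖(c k)‖ := by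
    calc ‖S‖ ^ 2 ≤ (∑ x : ZMod N, ‖(g x)‖) ^ 2 := by
          apply pow_le_pow_left₀ (norm_nonneg _) hS_le
      _ ≤ N * ∑ x : ZMod N, ‖(g x)‖ ^ 2 := hCS1
      _ ≤ N * (N * ∑ h : ZMod N, ‖(c (2*h))‖) := by
          exact mul_le_mul_of_nonneg_left hg_sq hNpos.le
      _ = (N:ℝ)^2 * ∑ k : ZMod N, ‖(c k)‖ := by rw [h2sum]; ring
  have hS4 : ‖S‖ ^ 4 ≤ (N:ℝ)^5 * Tr := by
    have h1 : ‖S‖ ^ 4 ≤ ((N:ℝ)^2 * ∑ k : ZMod N, ‖(c k)‖) ^ 2 := by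
      calc ‖S‖ ^ 4 = (‖S‖ ^ 2) ^ 2 := by ring
        _ ≤ ((N:ℝ)^2 * ∑ k : ZMod N, ‖(c k)‖) ^ 2 := by
            apply pow_le_pow_left₀ (by positivity) hSA
    calc ‖S‖ ^ 4
        ≤ ((N:ℝ)^2 * ∑ k : ZMod N, ‖(c k)‖) ^ 2 := h1
      _ = (N:ℝ)^4 * (∑ k : ZMod N, ‖(c k)‖) ^ 2 := by ring
      _ ≤ (N:ℝ)^4 * (N * Tr) := by
          exact mul_le_mul_of_nonneg_left hCS2 (by positivity)
      _ = (N:ℝ)^5 * Tr := by ring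
  -- final assembly
  have habsinv : ‖((N:ℂ)⁻¹)‖ = (N:ℝ)⁻¹ := by
    rw [norm_inv, Complex.norm_natCast]
  rw [norm_mul, norm_mul, norm_pow, norm_pow, habsinv, hTcast, Complex.norm_real, Real.norm_eq_abs,
    abs_of_nonneg hTrpos]
  have hx : (0:ℝ) ≤ ((N:ℝ)⁻¹)^2 * ‖S‖ := by positivity
  have hxy : (((N:ℝ)⁻¹)^2 * ‖S‖) ^ (4:ℕ) ≤ ((N:ℝ)⁻¹)^3 * Tr := by
    have : (((N:ℝ)⁻¹)^2 * ‖S‖) ^ (4:ℕ)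
        = ((N:ℝ)⁻¹)^8 * ‖S‖ ^ 4 := by ring
    rw [this]
    calc ((N:ℝ)⁻¹)^8 * ‖S‖ ^ 4
        ≤ ((N:ℝ)⁻¹)^8 * ((N:ℝ)^5 * Tr) := by
          exact mul_le_mul_of_nonneg_left hS4 (by positivity)
      _ = ((N:ℝ)⁻¹)^3 * Tr := by
          field_simp
  have := Real.rpow_le_rpow (by positivity) hxy (by norm_num : (0:ℝ) ≤ 1/4)
  calc ((N:ℝ)⁻¹)^2 * ‖S‖
      = ((((N:ℝ)⁻¹)^2 * ‖S‖) ^ (4:ℕ)) ^ ((1:ℝ)/4) := by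
        rw [← Real.rpow_natCast (((N:ℝ)⁻¹)^2 * ‖S‖) 4,
          ← Real.rpow_mul hx]
        norm_num
    _ ≤ (((N:ℝ)⁻¹)^3 * Tr) ^ ((1:ℝ)/4) := this
end

section
/- Let (Ω, μ) be a finite probability space, let 𝓑 ⊆ 𝓑' be σ-algebras on Ω, and let f, g : Ω → ℂ be such that 𝔼(f | 𝓑) = 0, g is 𝓑'-measurable, and |g| ≤ 1 pointwise. Then 𝔼(|𝔼(f|𝓑')|²) ≥ 𝔼(|𝔼(f|𝓑)|²) + |⟨f, g⟩|², where ⟨f,g⟩ = 𝔼(f · conj(g)). -/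
open MeasureTheory

lemma decomp_aux {Ω : Type*} [Fintype Ω] [MeasurableSpace Ω] (μ : Measure Ω)
    (g : Ω → ℂ) (hgm : Measurable g)
    (h : Ω → ℂ) (hh : Integrable h μ) (hg : ∀ ω, ‖g ω‖ ≤ 1) :
    ∫ ω, h ω * (starRingEnd ℂ) (g ω) ∂μ
      = ∑ c ∈ Finset.image g Finset.univ,
          (starRingEnd ℂ) c * ∫ ω in g ⁻¹' {c}, h ω ∂μ := by
  classical
  have hsm : ∀ c : ℂ, MeasurableSet (g ⁻¹' {c}) := fun c =>
    hgm (measurableSet_singleton c)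
  have hdisj : Set.Pairwise (↑(Finset.image g Finset.univ))
      (Function.onFun Disjoint fun c : ℂ => g ⁻¹' {c}) := by
    intro a _ b _ hab
    simp only [Function.onFun, Set.disjoint_left]
    intro ω ha hb
    exact hab (by simpa using ha.symm.trans (show g ω = b from hb))
  have hcover : (⋃ c ∈ Finset.image g Finset.univ, g ⁻¹' {c}) = Set.univ := by
    ext ω
    simp only [Set.mem_iUnion, Set.mem_preimage, Set.mem_singleton_iff, Set.mem_univ, iff_true]
    exact ⟨g ω, by simp, rfl⟩
  have hhg : Integrable (fun ω => h ω * (starRingEnd ℂ) (g ω)) μ := by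
    have hb : Integrable (fun ω => (starRingEnd ℂ) (g ω) * h ω) μ := by
      refine hh.bdd_mul (c := 1) ?_ (Filter.Eventually.of_forall fun ω => by simpa using hg ω)
      exact (Complex.continuous_conj.comp_aestronglyMeasurable
        hgm.aestronglyMeasurable)
    simpa [mul_comm] using hb
  have hdec := integral_biUnion_finset (μ := μ)
    (f := fun ω => h ω * (starRingEnd ℂ) (g ω)) (Finset.image g Finset.univ)
    (fun c _ => hsm c) hdisj (fun c _ => hhg.integrableOn)
  rw [hcover, setIntegral_univ] at hdec
  rw [hdec]
  refine Finset.sum_congr rfl fun c _ => ?_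
  have : ∫ ω in g ⁻¹' {c}, h ω * (starRingEnd ℂ) (g ω) ∂μ
      = ∫ ω in g ⁻¹' {c}, h ω * (starRingEnd ℂ) c ∂μ := by
    refine setIntegral_congr_fun (hsm c) fun ω hω => ?_
    simp only [Set.mem_preimage, Set.mem_singleton_iff] at hω
    rw [hω]
  rw [this, integral_mul_const, mul_comm]

lemma cs_aux {Ω : Type*} [Fintype Ω] [MeasurableSpace Ω] (μ : Measure Ω)
    [IsProbabilityMeasure μ] (F : Ω → ℂ) (hFi : Integrable F μ) :
    (∫ ω, ‖F ω‖ ∂μ) ^ 2 ≤ ∫ ω, ‖F ω‖ ^ 2 ∂μ := by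
  have hpq : Real.HolderConjugate 2 2 := by constructor <;> norm_num
  have hmem : MemLp (fun ω => ‖F ω‖) (ENNReal.ofReal 2) μ := by
    obtain ⟨C, hC⟩ := Finite.exists_le fun ω => ‖F ω‖
    exact MemLp.of_bound hFi.norm.aestronglyMeasurable C
      (Filter.Eventually.of_forall fun ω => by simpa using hC ω)
  have hone : MemLp (fun _ : Ω => (1 : ℝ)) (ENNReal.ofReal 2) μ := memLp_const 1
  have key := integral_mul_le_Lp_mul_Lq_of_nonneg hpq
    (Filter.Eventually.of_forall fun ω => norm_nonneg (F ω))
    (Filter.Eventually.of_forall fun _ => zero_le_one) hmem hone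
  have h1int : ∫ _ω : Ω, (1 : ℝ) ^ (2:ℝ) ∂μ = 1 := by
    simp [Real.one_rpow]
  rw [h1int, Real.one_rpow, mul_one] at key
  simp only [mul_one] at key
  have heq2 : ∫ ω, ‖F ω‖ ^ (2:ℝ) ∂μ = ∫ ω, ‖F ω‖ ^ 2 ∂μ := by
    refine integral_congr_ae (Filter.Eventually.of_forall fun ω => ?_)
    exact_mod_cast Real.rpow_natCast ‖F ω‖ 2
  rw [heq2] at key
  have hnn : 0 ≤ ∫ ω, ‖F ω‖ ^ 2 ∂μ := integral_nonneg fun ω => by positivity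
  calc (∫ ω, ‖F ω‖ ∂μ) ^ 2 ≤ ((∫ ω, ‖F ω‖ ^ 2 ∂μ) ^ (1 / (2:ℝ))) ^ 2 :=
        pow_le_pow_left₀ (integral_nonneg fun ω => norm_nonneg _) key 2
    _ = ∫ ω, ‖F ω‖ ^ 2 ∂μ := by
        rw [← Real.rpow_natCast ((∫ ω, ‖F ω‖ ^ 2 ∂μ) ^ (1 / (2:ℝ))) 2, ← Real.rpow_mul hnn]
        norm_num

theorem correlation_implies_energy_increment {Ω : Type*} [Fintype Ω]
    {m0 : MeasurableSpace Ω} (μ : Measure Ω) [IsProbabilityMeasure μ]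
    {m₁ m₂ : MeasurableSpace Ω} (h12 : m₁ ≤ m₂) (h2 : m₂ ≤ m0)
    (f g : Ω → ℂ) (hf : Integrable f μ)
    (hfm : μ[f|m₁] =ᵐ[μ] 0)
    (hgm : StronglyMeasurable[m₂] g) (hg : ∀ ω, ‖g ω‖ ≤ 1) :
    (∫ ω, ‖(μ[f|m₁]) ω‖ ^ 2 ∂μ) +
        ‖∫ ω, f ω * (starRingEnd ℂ) (g ω) ∂μ‖ ^ 2
      ≤ ∫ ω, ‖(μ[f|m₂]) ω‖ ^ 2 ∂μ := by
  classical
  set F := μ[f|m₂] with hF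
  have hFi : Integrable F μ := integrable_condExp
  have h1 : (∫ ω, ‖(μ[f|m₁]) ω‖ ^ 2 ∂μ) = 0 := by
    have : (fun ω => ‖(μ[f|m₁]) ω‖ ^ 2) =ᵐ[μ] fun _ => (0 : ℝ) := by
      filter_upwards [hfm] with ω hω
      simp [hω]
    rw [integral_congr_ae this, integral_zero]
  have hsm2 : ∀ c : ℂ, MeasurableSet[m₂] (g ⁻¹' {c}) := fun c =>
    hgm.measurable (measurableSet_singleton c)
  have hgm0 : Measurable[m0] g := (hgm.mono h2).measurable
  -- key identity: ⟨f, g⟩ = ⟨F, g⟩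
  have key : ∫ ω, f ω * (starRingEnd ℂ) (g ω) ∂μ
      = ∫ ω, F ω * (starRingEnd ℂ) (g ω) ∂μ := by
    rw [@decomp_aux Ω _ m0 μ g hgm0 f hf hg, @decomp_aux Ω _ m0 μ g hgm0 F hFi hg]
    refine Finset.sum_congr rfl fun c _ => ?_
    rw [setIntegral_condExp h2 hf (hsm2 c)]
  -- bound |⟨F,g⟩| ≤ ∫ ‖F‖
  have h3 : ‖∫ ω, F ω * (starRingEnd ℂ) (g ω) ∂μ‖ ≤ ∫ ω, ‖F ω‖ ∂μ := by
    have := norm_integral_le_integral_norm (μ := μ) (f := fun ω => F ω * (starRingEnd ℂ) (g ω))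
    refine le_trans this ?_
    refine integral_mono_of_nonneg (Filter.Eventually.of_forall fun ω => norm_nonneg _)
      hFi.norm (Filter.Eventually.of_forall fun ω => ?_)
    calc ‖F ω * (starRingEnd ℂ) (g ω)‖ = ‖F ω‖ * ‖g ω‖ := by
          rw [norm_mul]; simp
      _ ≤ ‖F ω‖ * 1 := mul_le_mul_of_nonneg_left (by simpa using hg ω) (norm_nonneg _)
      _ = ‖F ω‖ := mul_one _
  have h4 : (∫ ω, ‖F ω‖ ∂μ) ^ 2 ≤ ∫ ω, ‖F ω‖ ^ 2 ∂μ := @cs_aux Ω _ m0 μ _ F hFi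
  rw [h1, zero_add, key]
  calc ‖∫ ω, F ω * (starRingEnd ℂ) (g ω) ∂μ‖ ^ 2
      ≤ (∫ ω, ‖F ω‖ ∂μ) ^ 2 :=
        pow_le_pow_left₀ (norm_nonneg _) h3 2
    _ ≤ ∫ ω, ‖F ω‖ ^ 2 ∂μ := h4
    _ = ∫ ω, ‖F ω‖ ^ 2 ∂μ := by
        rfl
end
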